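/- The following two classes of directed graphs are definable by sentences of BndSCL under bounded semantics: (1) the class of directed graphs G = (V,E) (finite or infinite) that contain a cycle, i.e. a finite sequence u₁,…,u_k with k > 1, E u_i u_{i+1} for all i < k, u₁ = u_k, and u_i ≠ u_j for distinct i,j ∈ {1,…,k−1}; (2) the class of directed graphs with finite diameter, i.e. such that sup{d(u,v) : u,v ∈ V} is finite, where d(u,v) denotes directed distance. Concretely, the sentence ∃x∃y(x = y ∧ L(Eyx ∨ ∃z(Eyz ∧ ∃y(y = z ∧ C_L)))) is true in a directed graph under bounded semantics iff the graph contains a cycle, and the sentence ∀x∀y(x = y ∨ L(Exy ∨ ∃z(Exz ∧ ∃x(x = z ∧ C_L)))) is true under bounded semantics iff the graph has finite diameter. -/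

import Mathlib

/-
Common formalization of the logics SCL (static computation logic, unbounded
game-theoretic semantics) and BndSCL (bounded semantics), following the paper
"First-order logic with self-reference".

* Games are played on arbitrary (possibly infinite) arenas; plays are maximal
  walks; strategies are functions from finite walks (histories) to positions;
  infinite plays, and finite plays ending at a dead end where `win` holds for
  neither player, are won by nobody.
* The semantic games are formalized with positions carrying the current
  (sub)formula, an environment binding each label symbol to the labelled
  formula it most recently named (this is the standard closure rendering of
  "reference formula of a claim-symbol occurrence"), the current assignment
  and the polarity (+ = true, − = false).  The bounded game additionally
  carries a clock value.
-/

set_option autoImplicit false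

universe u

/-! ## Generic two-player games on (possibly infinite) arenas -/

inductive Player : Type
  | eloise : Player
  | abelard : Player
deriving DecidableEq

def Player.opp : Player → Player
  | .eloise => .abelard
  | .abelard => .eloise

/-- A game arena: an ownership function (corresponding to the partition
`V = V₀ ∪ V₁`), an edge relation, and a predicate telling which player (if
any) wins a play ending at a given dead-end position. -/
structure GameArena (P : Type u) where
  turn : P → Player
  edge : P → P → Prop
  win : P → Player → Prop

namespace GameArena

variable {P : Type u} (A : GameArena P)

def DeadEnd (u : P) : Prop := ∀ x, ¬ A.edge u x

/-- `w` is a finite nonempty walk whose first element is `v`. -/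
def IsWalkFrom (v : P) (w : List P) : Prop :=
  w.head? = some v ∧ List.Chain' A.edge w

/-- A finite (maximal) play from `v`: a walk whose last element is a dead end. -/
def IsFinitePlay (v : P) (w : List P) : Prop :=
  A.IsWalkFrom v w ∧ ∀ u, w.getLast? = some u → A.DeadEnd u

/-- An infinite play from `v`. -/
def IsInfPlay (v : P) (f : ℕ → P) : Prop :=
  f 0 = v ∧ ∀ n, A.edge (f n) (f (n + 1))

/-- A strategy (a function from histories to positions) of player `pl` is
legal if it always prescribes a move along an edge whenever a move exists. -/
def LegalFor (pl : Player) (v : P) (σ : List P → P) : Prop :=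
  ∀ w u, A.IsWalkFrom v w → w.getLast? = some u → A.turn u = pl →
    (∃ x, A.edge u x) → A.edge u (σ w)

/-- The strategy `σ` of player `pl` is followed in the finite play `w`. -/
def FollowsFin (pl : Player) (σ : List P → P) (w : List P) : Prop :=
  ∀ q u x, (q ++ [x]) <+: w → q.getLast? = some u → A.turn u = pl → x = σ q

/-- The strategy `σ` of player `pl` is followed in the infinite play `f`. -/
def FollowsInf (pl : Player) (σ : List P → P) (f : ℕ → P) : Prop :=
  ∀ n, A.turn (f n) = pl →
    f (n + 1) = σ (List.ofFn fun i : Fin (n + 1) => f i)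

/-- `σ` is a winning strategy of player `pl` from `v`: it is legal, every
finite maximal play following it ends in a dead end won by `pl`, and no
infinite play follows it (infinite plays are won by neither player). -/
def WinningStrategy (pl : Player) (v : P) (σ : List P → P) : Prop :=
  A.LegalFor pl v σ ∧
  (∀ w, A.IsFinitePlay v w → A.FollowsFin pl σ w →
      ∃ u, w.getLast? = some u ∧ A.win u pl) ∧
  (∀ f, A.IsInfPlay v f → ¬ A.FollowsInf pl σ f)

def HasWinningStrategy (pl : Player) (v : P) : Prop :=
  ∃ σ : List P → P, A.WinningStrategy pl v σ

end GameArena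

/-- A positional strategy: its moves depend only on the current position. -/
def Positional {P : Type u} (σ : List P → P) : Prop :=
  ∀ q q' : List P, q.getLast? = q'.getLast? → σ q = σ q'

/-! ## Syntax of SCL / BndSCL -/

/-- A purely relational vocabulary. -/
structure Vocab : Type 1 where
  Rel : Type
  arity : Rel → ℕ

/-- Formulas of SCL / BndSCL over the vocabulary `V`.  Variables and label
symbols are natural numbers; `claim L` is the claim symbol `C_L` and
`lab L φ` is the labelled formula `L φ`. -/
inductive SCLFormula (V : Vocab) : Type
  | bot : SCLFormula V
  | eq (x y : ℕ) : SCLFormula V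
  | rel (R : V.Rel) (args : Fin (V.arity R) → ℕ) : SCLFormula V
  | claim (L : ℕ) : SCLFormula V
  | not (φ : SCLFormula V) : SCLFormula V
  | and (φ ψ : SCLFormula V) : SCLFormula V
  | or (φ ψ : SCLFormula V) : SCLFormula V
  | ex (x : ℕ) (φ : SCLFormula V) : SCLFormula V
  | all (x : ℕ) (φ : SCLFormula V) : SCLFormula V
  | lab (L : ℕ) (φ : SCLFormula V) : SCLFormula V

namespace SCLFormula

variable {V : Vocab}

/-- First-order atoms. -/
def IsFOAtom : SCLFormula V → Prop
  | .bot => True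
  | .eq _ _ => True
  | .rel _ _ => True
  | _ => False

/-- Purely first-order formulas (no claim symbols, no label symbols). -/
def IsFO : SCLFormula V → Prop
  | .bot => True
  | .eq _ _ => True
  | .rel _ _ => True
  | .claim _ => False
  | .not φ => IsFO φ
  | .and φ ψ => IsFO φ ∧ IsFO ψ
  | .or φ ψ => IsFO φ ∧ IsFO ψ
  | .ex _ φ => IsFO φ
  | .all _ φ => IsFO φ
  | .lab _ _ => False

/-- Free (individual) variables. -/
def freeVars : SCLFormula V → Finset ℕ
  | .bot => ∅
  | .eq x y => {x, y}
  | .rel _ a => Finset.image a Finset.univ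
  | .claim _ => ∅
  | .not φ => freeVars φ
  | .and φ ψ => freeVars φ ∪ freeVars ψ
  | .or φ ψ => freeVars φ ∪ freeVars ψ
  | .ex x φ => freeVars φ \ {x}
  | .all x φ => freeVars φ \ {x}
  | .lab _ φ => freeVars φ

/-- All variables occurring in a formula (free or bound). -/
def vars : SCLFormula V → Finset ℕ
  | .bot => ∅
  | .eq x y => {x, y}
  | .rel _ a => Finset.image a Finset.univ
  | .claim _ => ∅
  | .not φ => vars φ
  | .and φ ψ => vars φ ∪ vars ψ
  | .or φ ψ => vars φ ∪ vars ψ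
  | .ex x φ => insert x (vars φ)
  | .all x φ => insert x (vars φ)
  | .lab _ φ => vars φ

/-- Sentences: formulas with no free variables. -/
def IsSentence (φ : SCLFormula V) : Prop := freeVars φ = ∅

end SCLFormula

/-! ## Structures and first-order (Tarski) satisfaction -/

/-- A (suitable) model for vocabulary `V`: a nonempty domain together with an
interpretation of all relation symbols. -/
structure Struct (V : Vocab) where
  Dom : Type u
  dom_nonempty : Nonempty Dom
  interp : ∀ R : V.Rel, (Fin (V.arity R) → Dom) → Prop

attribute [instance] Struct.dom_nonempty

/-- Satisfaction of atoms (false on non-atoms). -/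
def atomSat {V : Vocab} (M : Struct.{u} V) (s : ℕ → M.Dom) : SCLFormula V → Prop
  | .bot => False
  | .eq x y => s x = s y
  | .rel R a => M.interp R fun i => s (a i)
  | _ => False

/-- Standard (Tarski) first-order satisfaction.  It is only meaningful on
purely first-order formulas; claim symbols are interpreted as `False` and
label symbols are ignored. -/
def FOSat {V : Vocab} (M : Struct.{u} V) : (ℕ → M.Dom) → SCLFormula V → Prop
  | _, .bot => False
  | s, .eq x y => s x = s y
  | s, .rel R a => M.interp R fun i => s (a i)
  | _, .claim _ => False
  | s, .not φ => ¬ FOSat M s φ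
  | s, .and φ ψ => FOSat M s φ ∧ FOSat M s ψ
  | s, .or φ ψ => FOSat M s φ ∨ FOSat M s ψ
  | s, .ex x φ => ∃ a : M.Dom, FOSat M (Function.update s x a) φ
  | s, .all x φ => ∀ a : M.Dom, FOSat M (Function.update s x a) φ
  | s, .lab _ φ => FOSat M s φ

/-! ## The evaluation games -/

/-- A position of the semantic game: the current formula, the environment
recording for each label symbol `L` the reference formula `L ψ` it currently
names, the current assignment, and the polarity (`true` = `+`). -/
structure SCLPos (V : Vocab) (D : Type u) : Type u where
  form : SCLFormula V
  env : ℕ → Option (SCLFormula V)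
  asg : ℕ → D
  pol : Bool

/-- Which player moves at a given position. (At positions with at most one
successor the owner is irrelevant; we let Eloise own them.) -/
def posTurn {V : Vocab} {D : Type u} (p : SCLPos V D) : Player :=
  match p.form, p.pol with
  | .and _ _, true => .abelard
  | .and _ _, false => .eloise
  | .or _ _, true => .eloise
  | .or _ _, false => .abelard
  | .all _ _, true => .abelard
  | .all _ _, false => .eloise
  | .ex _ _, true => .eloise
  | .ex _ _, false => .abelard
  | _, _ => .eloise

/-- Who wins a play ending at a given position: at an FO-atom position,
Eloise wins iff the atom's truth value agrees with the polarity, and Abelard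
wins otherwise; plays ending anywhere else (e.g. at a claim symbol with no
reference formula, or with clock value 0) are won by neither player. -/
def posWin {V : Vocab} (M : Struct.{u} V) (p : SCLPos V M.Dom) : Player → Prop
  | .eloise => p.form.IsFOAtom ∧ (atomSat M p.asg p.form ↔ p.pol = true)
  | .abelard => p.form.IsFOAtom ∧ ¬ (atomSat M p.asg p.form ↔ p.pol = true)

/-- Moves of the unbounded evaluation game `G_∞`. -/
inductive UStep {V : Vocab} (M : Struct.{u} V) :
    SCLPos V M.Dom → SCLPos V M.Dom → Prop
  | neg (φ : SCLFormula V) (e : ℕ → Option (SCLFormula V)) (s : ℕ → M.Dom) (b : Bool) :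
      UStep M ⟨.not φ, e, s, b⟩ ⟨φ, e, s, !b⟩
  | andLeft (φ ψ : SCLFormula V) (e : ℕ → Option (SCLFormula V)) (s : ℕ → M.Dom) (b : Bool) :
      UStep M ⟨.and φ ψ, e, s, b⟩ ⟨φ, e, s, b⟩
  | andRight (φ ψ : SCLFormula V) (e : ℕ → Option (SCLFormula V)) (s : ℕ → M.Dom) (b : Bool) :
      UStep M ⟨.and φ ψ, e, s, b⟩ ⟨ψ, e, s, b⟩
  | orLeft (φ ψ : SCLFormula V) (e : ℕ → Option (SCLFormula V)) (s : ℕ → M.Dom) (b : Bool) :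
      UStep M ⟨.or φ ψ, e, s, b⟩ ⟨φ, e, s, b⟩
  | orRight (φ ψ : SCLFormula V) (e : ℕ → Option (SCLFormula V)) (s : ℕ → M.Dom) (b : Bool) :
      UStep M ⟨.or φ ψ, e, s, b⟩ ⟨ψ, e, s, b⟩
  | exStep (x : ℕ) (φ : SCLFormula V) (e : ℕ → Option (SCLFormula V)) (s : ℕ → M.Dom)
      (b : Bool) (a : M.Dom) :
      UStep M ⟨.ex x φ, e, s, b⟩ ⟨φ, e, Function.update s x a, b⟩
  | allStep (x : ℕ) (φ : SCLFormula V) (e : ℕ → Option (SCLFormula V)) (s : ℕ → M.Dom)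
      (b : Bool) (a : M.Dom) :
      UStep M ⟨.all x φ, e, s, b⟩ ⟨φ, e, Function.update s x a, b⟩
  | labStep (L : ℕ) (φ : SCLFormula V) (e : ℕ → Option (SCLFormula V)) (s : ℕ → M.Dom)
      (b : Bool) :
      UStep M ⟨.lab L φ, e, s, b⟩ ⟨φ, Function.update e L (some (.lab L φ)), s, b⟩
  | claimStep (L : ℕ) (e : ℕ → Option (SCLFormula V)) (s : ℕ → M.Dom) (b : Bool)
      (χ : SCLFormula V) (h : e L = some χ) :
      UStep M ⟨.claim L, e, s, b⟩ ⟨χ, e, s, b⟩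

/-- Moves of the `n`-bounded evaluation game: positions additionally carry a
clock value, which decreases by one exactly at jumps from a claim symbol to
its reference formula; a claim-symbol position with clock value `0` is a dead
end won by neither player. -/
inductive BStep {V : Vocab} (M : Struct.{u} V) :
    SCLPos V M.Dom × ℕ → SCLPos V M.Dom × ℕ → Prop
  | neg (φ : SCLFormula V) (e : ℕ → Option (SCLFormula V)) (s : ℕ → M.Dom) (b : Bool) (n : ℕ) :
      BStep M (⟨.not φ, e, s, b⟩, n) (⟨φ, e, s, !b⟩, n)
  | andLeft (φ ψ : SCLFormula V) (e : ℕ → Option (SCLFormula V)) (s : ℕ → M.Dom) (b : Bool)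
      (n : ℕ) : BStep M (⟨.and φ ψ, e, s, b⟩, n) (⟨φ, e, s, b⟩, n)
  | andRight (φ ψ : SCLFormula V) (e : ℕ → Option (SCLFormula V)) (s : ℕ → M.Dom) (b : Bool)
      (n : ℕ) : BStep M (⟨.and φ ψ, e, s, b⟩, n) (⟨ψ, e, s, b⟩, n)
  | orLeft (φ ψ : SCLFormula V) (e : ℕ → Option (SCLFormula V)) (s : ℕ → M.Dom) (b : Bool)
      (n : ℕ) : BStep M (⟨.or φ ψ, e, s, b⟩, n) (⟨φ, e, s, b⟩, n)
  | orRight (φ ψ : SCLFormula V) (e : ℕ → Option (SCLFormula V)) (s : ℕ → M.Dom) (b : Bool)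
      (n : ℕ) : BStep M (⟨.or φ ψ, e, s, b⟩, n) (⟨ψ, e, s, b⟩, n)
  | exStep (x : ℕ) (φ : SCLFormula V) (e : ℕ → Option (SCLFormula V)) (s : ℕ → M.Dom)
      (b : Bool) (n : ℕ) (a : M.Dom) :
      BStep M (⟨.ex x φ, e, s, b⟩, n) (⟨φ, e, Function.update s x a, b⟩, n)
  | allStep (x : ℕ) (φ : SCLFormula V) (e : ℕ → Option (SCLFormula V)) (s : ℕ → M.Dom)
      (b : Bool) (n : ℕ) (a : M.Dom) :
      BStep M (⟨.all x φ, e, s, b⟩, n) (⟨φ, e, Function.update s x a, b⟩, n)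
  | labStep (L : ℕ) (φ : SCLFormula V) (e : ℕ → Option (SCLFormula V)) (s : ℕ → M.Dom)
      (b : Bool) (n : ℕ) :
      BStep M (⟨.lab L φ, e, s, b⟩, n) (⟨φ, Function.update e L (some (.lab L φ)), s, b⟩, n)
  | claimStep (L : ℕ) (e : ℕ → Option (SCLFormula V)) (s : ℕ → M.Dom) (b : Bool)
      (χ : SCLFormula V) (n : ℕ) (h : e L = some χ) :
      BStep M (⟨.claim L, e, s, b⟩, n + 1) (⟨χ, e, s, b⟩, n)

/-- The unbounded evaluation game `G_∞(𝔄, ·, ·)` as a game arena. -/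
def gameU {V : Vocab} (M : Struct.{u} V) : GameArena (SCLPos V M.Dom) where
  turn := posTurn
  edge := UStep M
  win := posWin M

/-- The bounded evaluation games `G_n(𝔄, ·, ·)` (for all clock values `n`
simultaneously) as a game arena. -/
def gameB {V : Vocab} (M : Struct.{u} V) : GameArena (SCLPos V M.Dom × ℕ) where
  turn p := posTurn p.1
  edge := BStep M
  win p := posWin M p.1

/-- The initial position of the evaluation game for `φ` under assignment `s`:
empty environment and positive polarity. -/
def initPos {V : Vocab} {D : Type u} (φ : SCLFormula V) (s : ℕ → D) : SCLPos V D :=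
  ⟨φ, fun _ => none, s, true⟩

/-- Truth under the unbounded semantics (the logic SCL):
`𝔄,s ⊨ φ` iff Eloise has a winning strategy in `G_∞(𝔄,s,φ)`. -/
def SCLTrue {V : Vocab} (M : Struct.{u} V) (s : ℕ → M.Dom) (φ : SCLFormula V) : Prop :=
  (gameU M).HasWinningStrategy .eloise (initPos φ s)

/-! ### The bounded game `G_ω` -/

/-- Positions of the game `G_ω`: the initial position (where Abelard picks a
number `n'`), the intermediate positions (where Eloise picks some `n ≥ n'`),
and the positions of the `n`-bounded games. -/
inductive GOPos (V : Vocab) (D : Type u) : Type u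
  | start : GOPos V D
  | mid (n' : ℕ) : GOPos V D
  | inner (p : SCLPos V D) (clock : ℕ) : GOPos V D

inductive GOStep {V : Vocab} (M : Struct.{u} V) (φ : SCLFormula V) (s : ℕ → M.Dom) :
    GOPos V M.Dom → GOPos V M.Dom → Prop
  | abelardPick (n' : ℕ) : GOStep M φ s .start (.mid n')
  | eloisePick (n' n : ℕ) (h : n' ≤ n) : GOStep M φ s (.mid n') (.inner (initPos φ s) n)
  | play (p q : SCLPos V M.Dom) (m k : ℕ) (h : BStep M (p, m) (q, k)) :
      GOStep M φ s (.inner p m) (.inner q k)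

def goTurn {V : Vocab} {D : Type u} : GOPos V D → Player
  | .start => .abelard
  | .mid _ => .eloise
  | .inner p _ => posTurn p

def goWin {V : Vocab} (M : Struct.{u} V) : GOPos V M.Dom → Player → Prop
  | .inner p _, pl => posWin M p pl
  | _, _ => False

/-- The bounded evaluation game `G_ω(𝔄,s,φ)`: Abelard picks `n' ∈ ℕ`, then
Eloise picks `n ≥ n'`, and then `G_n(𝔄,s,φ)` is played. -/
def gameOmega {V : Vocab} (M : Struct.{u} V) (φ : SCLFormula V) (s : ℕ → M.Dom) :
    GameArena (GOPos V M.Dom) where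
  turn := goTurn
  edge := GOStep M φ s
  win := goWin M

/-- Truth under the bounded semantics (the logic BndSCL):
`𝔄,s ⊨_ω φ` iff Eloise has a winning strategy in `G_ω(𝔄,s,φ)`. -/
def BndTrue {V : Vocab} (M : Struct.{u} V) (s : ℕ → M.Dom) (φ : SCLFormula V) : Prop :=
  (gameOmega M φ s).HasWinningStrategy .eloise .start

/-! ## Approximants -/

/-- Auxiliary structural recursion for approximants: `k` tells what to put in
place of a claim symbol.  Label symbols are deleted (while updating the
environment), and polarity is tracked through negations. -/
def approxCore {V : Vocab}
    (k : (ℕ → Option (SCLFormula V)) → Bool → ℕ → SCLFormula V) :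
    (ℕ → Option (SCLFormula V)) → Bool → SCLFormula V → SCLFormula V
  | _, _, .bot => .bot
  | _, _, .eq x y => .eq x y
  | _, _, .rel R a => .rel R a
  | e, b, .claim L => k e b L
  | e, b, .not φ => .not (approxCore k e (!b) φ)
  | e, b, .and φ ψ => .and (approxCore k e b φ) (approxCore k e b ψ)
  | e, b, .or φ ψ => .or (approxCore k e b φ) (approxCore k e b ψ)
  | e, b, .ex x φ => .ex x (approxCore k e b φ)
  | e, b, .all x φ => .all x (approxCore k e b φ)
  | e, b, .lab L φ => approxCore k (Function.update e L (some (.lab L φ))) b φ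

/-- `approx n e b φ` unfolds each claim symbol of `φ` (in environment `e`,
under polarity `b`) through `n` jumps to reference formulas; claim symbols
reached with exhausted budget (or with no reference formula) are replaced by
`⊥` at positive occurrences and `⊤` (i.e. `¬⊥`) at negative occurrences, and
all label symbols are deleted. -/
def approx {V : Vocab} : ℕ → (ℕ → Option (SCLFormula V)) → Bool → SCLFormula V → SCLFormula V
  | 0 => approxCore fun _ b _ => if b then .bot else .not .bot
  | n + 1 => approxCore fun e b L =>
      match e L with
      | some χ => approx n e b χ
      | none => if b then .bot else .not .bot

/-- The `n`-th approximant `Φⁿ_φ` of `φ`: the first-order formula obtained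
from the `n`-th unfolding of `φ` by deleting all label symbols and replacing
positive claim occurrences by `⊥` and negative ones by `⊤`. -/
def approximant {V : Vocab} (φ : SCLFormula V) (n : ℕ) : SCLFormula V :=
  approx n (fun _ => none) true φ

/-! ## Directed graphs as structures over one binary relation symbol -/

/-- The vocabulary with a single binary relation symbol. -/
abbrev binVocab : Vocab := ⟨Unit, fun _ => 2⟩

/-- The edge relation of a `binVocab`-structure. -/
def Edge (M : Struct.{u} binVocab) (a b : M.Dom) : Prop :=
  M.interp Unit.unit (fun i => if i.val = 0 then a else b)

/-- The atomic formula `E x y` (for variables `x`, `y`). -/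
def Eform (x y : ℕ) : SCLFormula binVocab :=
  .rel Unit.unit (fun i => if i.val = 0 then x else y)

/-- The sentence `∃x∃y(x = y ∧ L(Eyx ∨ ∃z(Eyz ∧ ∃y(y = z ∧ C_L))))`,
with `x = 0`, `y = 1`, `z = 2` and label symbol `L = 0`. -/
def phiCycle : SCLFormula binVocab :=
  .ex 0 (.ex 1 (.and (.eq 0 1)
    (.lab 0 (.or (Eform 1 0)
      (.ex 2 (.and (Eform 1 2) (.ex 1 (.and (.eq 1 2) (.claim 0)))))))))

/-- The sentence `∀x∀y(x = y ∨ L(Exy ∨ ∃z(Exz ∧ ∃x(x = z ∧ C_L))))`,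
with `x = 0`, `y = 1`, `z = 2` and label symbol `L = 0`. -/
def phiDiam : SCLFormula binVocab :=
  .all 0 (.all 1 (.or (.eq 0 1)
    (.lab 0 (.or (Eform 0 1)
      (.ex 2 (.and (Eform 0 2) (.ex 0 (.and (.eq 0 2) (.claim 0)))))))))

/-- The directed graph `M` contains a cycle: a sequence `u₀, …, uₙ` with
`n ≥ 1` (i.e. more than one entry), consecutive edges, `u₀ = uₙ`, and with
`u₀, …, u_{n-1}` pairwise distinct. -/
def HasCycle (M : Struct.{u} binVocab) : Prop :=
  ∃ (n : ℕ) (f : ℕ → M.Dom), 1 ≤ n ∧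
    (∀ i, i < n → Edge M (f i) (f (i + 1))) ∧
    f 0 = f n ∧
    (∀ i j, i < n → j < n → i ≠ j → f i ≠ f j)

/-- There is a directed walk of length at most `n` from `u` to `v`,
i.e. the directed distance `d(u,v)` is at most `n`. -/
def ReachIn (M : Struct.{u} binVocab) (u v : M.Dom) (n : ℕ) : Prop :=
  ∃ (m : ℕ) (f : ℕ → M.Dom), m ≤ n ∧ f 0 = u ∧ f m = v ∧
    ∀ i, i < m → Edge M (f i) (f (i + 1))

/-- The directed graph `M` has finite diameter: `sup {d(u,v) | u,v} < ∞`. -/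
def FiniteDiameter (M : Struct.{u} binVocab) : Prop :=
  ∃ n : ℕ, ∀ u v : M.Dom, ReachIn M u v n


/-!
The bounded game `G_ω` has no infinite plays (each move lowers the phase, the clock, or the
formula), and its moves follow clause by clause the recursion defining the approximants: Eloise
wins the position `(ψ, s, ±)` with clock `n` iff the `n`-th approximant of `ψ` holds (resp.
fails) at `s`. Hence `𝔄, s ⊨_ω φ` iff infinitely many approximants of `φ` hold in `𝔄, s`.

In both sentences the labelled subformula claims a walk from `x` to `y`, and its `n`-th
approximant says that there is one of length between `1` and `n + 1`. So the approximants of the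
first sentence say "there is a closed walk of length at most `n + 1`", those of the second say
"every vertex reaches every other in at most `n + 1` steps"; both conditions are monotone in `n`,
and a closed walk of minimal length is a cycle.
-/

namespace GameArena

variable {P : Type u} {A : GameArena P}

theorem IsWalkFrom.cons {v x : P} {w : List P} (hvx : A.edge v x) (hw : A.IsWalkFrom x w) :
    A.IsWalkFrom v (v :: w) := by
  obtain ⟨hhead, hchain⟩ := hw
  refine ⟨rfl, List.isChain_cons.2 ⟨fun y hy => ?_, hchain⟩⟩
  rw [hhead, Option.mem_def, Option.some.injEq] at hy
  exact hy ▸ hvx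

theorem IsWalkFrom.ne_nil {v : P} {w : List P} (hw : A.IsWalkFrom v w) : w ≠ [] := by
  rintro rfl
  exact absurd hw.1 (by simp)

theorem HasWinningStrategy.win_of_deadEnd {pl : Player} {v : P}
    (h : A.HasWinningStrategy pl v) (hd : A.DeadEnd v) : A.win v pl := by
  obtain ⟨σ, -, hfin, -⟩ := h
  have hfollow : A.FollowsFin pl σ [v] := by
    intro q u x hpre hq _
    obtain rfl : q = [] := List.eq_nil_of_length_eq_zero (by simpa using hpre.length_le)
    simp at hq
  obtain ⟨u, hu, hwin⟩ :=
    hfin [v] ⟨⟨rfl, List.isChain_singleton v⟩, by simpa using hd⟩ hfollow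
  rw [List.getLast?_singleton, Option.some.injEq] at hu
  exact hu ▸ hwin

theorem WinningStrategy.tail {σ : List P → P} {v x : P} {pl : Player}
    (h : A.WinningStrategy pl v σ) (hx : A.edge v x) (hcons : A.turn v = pl → x = σ [v]) :
    A.WinningStrategy pl x (fun q => σ (v :: q)) := by
  obtain ⟨hlegal, hfin, hinf⟩ := h
  have hlast : ∀ {w : List P}, w ≠ [] → (v :: w).getLast? = w.getLast? := by
    rintro (_ | ⟨a, l⟩) hw
    · exact absurd rfl hw
    · simp [List.getLast?_cons_cons]
  have hfollow : ∀ w, A.IsWalkFrom x w →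
      A.FollowsFin pl (fun q => σ (v :: q)) w → A.FollowsFin pl σ (v :: w) := by
    rintro w hw hfw (_ | ⟨a, q⟩) u y hpre hq hturn
    · simp at hq
    rw [List.cons_append, List.cons_prefix_cons] at hpre
    obtain ⟨rfl, hpre⟩ := hpre
    rcases q with _ | ⟨b, q⟩
    · rw [List.getLast?_singleton, Option.some.injEq] at hq
      subst hq
      obtain ⟨c, l, rfl⟩ := List.exists_cons_of_ne_nil hw.ne_nil
      rw [List.nil_append, List.cons_prefix_cons] at hpre
      obtain ⟨rfl, -⟩ := hpre
      rw [show y = x by simpa using hw.1]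
      exact hcons hturn
    · exact hfw (b :: q) u y hpre (by rwa [hlast (List.cons_ne_nil _ _)] at hq) hturn
  refine ⟨fun w u hw hu => hlegal (v :: w) u (hw.cons hx) (by rwa [hlast hw.ne_nil]),
    fun w ⟨hw, hdead⟩ hfw => ?_, fun f hf hff => ?_⟩
  · obtain ⟨u, hu, hwin⟩ := hfin (v :: w)
      ⟨hw.cons hx, fun u hu => hdead u (by rwa [hlast hw.ne_nil] at hu)⟩ (hfollow w hw hfw)
    exact ⟨u, by rwa [hlast hw.ne_nil] at hu, hwin⟩
  · refine hinf (fun n => Nat.casesOn n v f) ⟨rfl, ?_⟩ ?_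
    · rintro (_ | n)
      · simpa [hf.1] using hx
      · exact hf.2 n
    · rintro (_ | n) hturn
      · simpa [hf.1] using hcons hturn
      · have hofFn : (List.ofFn fun i : Fin (n + 2) => (Nat.casesOn i.val v f : P))
            = v :: List.ofFn fun i : Fin (n + 1) => f i := by
          rw [List.ofFn_succ]; rfl
        rw [hofFn]
        exact hff n hturn

theorem HasWinningStrategy.exists_edge {v : P} (h : A.HasWinningStrategy .eloise v)
    (hturn : A.turn v = .eloise) (hmove : ¬ A.DeadEnd v) :
    ∃ x, A.edge v x ∧ A.HasWinningStrategy .eloise x := by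
  obtain ⟨σ, hσ⟩ := h
  have hedge : A.edge v (σ [v]) :=
    hσ.1 [v] v ⟨rfl, List.isChain_singleton v⟩ rfl hturn (by simpa [DeadEnd] using hmove)
  exact ⟨σ [v], hedge, _, hσ.tail hedge fun _ => rfl⟩

theorem HasWinningStrategy.of_edge {v x : P} (h : A.HasWinningStrategy .eloise v)
    (hturn : A.turn v = .abelard) (hx : A.edge v x) : A.HasWinningStrategy .eloise x := by
  obtain ⟨σ, hσ⟩ := h
  exact ⟨_, hσ.tail hx fun he => Player.noConfusion (hturn.symm.trans he)⟩

variable (A) in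
/-- Eloise's controllable predecessor of `G`. -/
def eloiseCPre (G : P → Prop) (v : P) : Prop :=
  match A.turn v with
  | .eloise => (A.DeadEnd v ∧ A.win v .eloise) ∨ ∃ x, A.edge v x ∧ G x
  | .abelard => (A.DeadEnd v → A.win v .eloise) ∧ ∀ x, A.edge v x → G x

theorem not_isInfPlay_of_wellFounded (hwf : WellFounded fun x v => A.edge v x) (v : P)
    (f : ℕ → P) : ¬ A.IsInfPlay v f := fun hf =>
  (wellFounded_iff_isEmpty_descending_chain.1 hwf).elim ⟨f, hf.2⟩

theorem IsWalkFrom.getLast_mem_of_followsFin {pl : Player} {v : P} {w : List P}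
    {G : P → Prop} {F : P → P} (hw : A.IsWalkFrom v w)
    (hfollow : A.FollowsFin pl (fun q => F (q.getLast?.getD v)) w) (hv : G v)
    (hstep : ∀ y z, G y → A.edge y z → (A.turn y = pl → z = F y) → G z) :
    ∀ z, w.getLast? = some z → G z := by
  suffices ∀ q, q <+: w → ∀ z, q.getLast? = some z → G z from this w (List.prefix_refl w)
  intro q
  induction q using List.reverseRecOn with
  | nil => simp
  | append_singleton q z ih =>
    intro hpre z' hz'
    obtain rfl : z = z' := by simpa using hz'
    rcases List.eq_nil_or_concat q with rfl | ⟨q, y, rfl⟩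
    · obtain ⟨l, rfl⟩ := hpre
      obtain rfl : v = z := by simpa using hw.1.symm
      exact hv
    · rw [List.concat_eq_append] at hpre ih
      have hyz : A.edge y z := by
        have hchain := hw.2.prefix hpre
        rw [List.isChain_append] at hchain
        exact hchain.2.2 y (by simp) z rfl
      refine hstep y z (ih ((List.prefix_append _ _).trans hpre) y (by simp)) hyz fun hturn => ?_
      simpa using hfollow (q ++ [y]) y z hpre (by simp) hturn

theorem hasWinningStrategy_of_le_eloiseCPre (hwf : WellFounded fun x v => A.edge v x)
    {G : P → Prop} (hG : ∀ v, G v → A.eloiseCPre G v) {v : P} (hv : G v) :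
    A.HasWinningStrategy .eloise v := by
  classical
  -- Asking only for `G u → G x` makes `F` a legal move also outside `G`.
  let F : P → P := fun u => if h : ∃ x, A.edge u x ∧ (G u → G x) then h.choose else u
  have hF : ∀ u, A.turn u = .eloise → (∃ x, A.edge u x) →
      A.edge u (F u) ∧ (G u → G (F u)) := by
    intro u hturn ⟨x, hx⟩
    have h : ∃ x, A.edge u x ∧ (G u → G x) := by
      by_cases hu : G u
      · have hpre := hG u hu
        simp only [eloiseCPre, hturn] at hpre
        obtain ⟨hdead, -⟩ | ⟨y, hy, hGy⟩ := hpre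
        · exact absurd hx (hdead x)
        · exact ⟨y, hy, fun _ => hGy⟩
      · exact ⟨x, hx, fun h => absurd h hu⟩
    simpa only [F, dif_pos h] using h.choose_spec
  have hstep : ∀ y z, G y → A.edge y z → (A.turn y = .eloise → z = F y) → G z := by
    intro y z hy hyz hfollow
    cases hturn : A.turn y with
    | eloise => exact hfollow hturn ▸ (hF y hturn ⟨z, hyz⟩).2 hy
    | abelard =>
      have hpre := hG y hy
      simp only [eloiseCPre, hturn] at hpre
      exact hpre.2 z hyz
  refine ⟨fun w => F (w.getLast?.getD v), fun w u _ hu hturn hmove => ?_,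
    fun w ⟨hw, hdead⟩ hfollow => ?_, fun f hf _ => not_isInfPlay_of_wellFounded hwf v f hf⟩
  · simpa only [hu, Option.getD_some] using (hF u hturn hmove).1
  obtain ⟨z, hz⟩ : ∃ z, w.getLast? = some z :=
    Option.ne_none_iff_exists'.1 (by simpa using hw.ne_nil)
  have hpre := hG z (hw.getLast_mem_of_followsFin hfollow hv hstep z hz)
  refine ⟨z, hz, ?_⟩
  unfold eloiseCPre at hpre
  split at hpre
  · obtain ⟨-, hwin⟩ | ⟨x, hx, -⟩ := hpre
    · exact hwin
    · exact absurd hx (hdead z hz x)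
  · exact hpre.1 (hdead z hz)

theorem hasWinningStrategy_iff_of_eq_eloiseCPre (hwf : WellFounded fun x v => A.edge v x)
    {G : P → Prop} (hG : ∀ v, G v ↔ A.eloiseCPre G v) (v : P) :
    A.HasWinningStrategy .eloise v ↔ G v := by
  refine ⟨fun hW => ?_, hasWinningStrategy_of_le_eloiseCPre hwf fun v => (hG v).1⟩
  induction v using hwf.induction with
  | _ v ih =>
  rw [hG, eloiseCPre]
  split
  next hturn =>
    by_cases hdead : A.DeadEnd v
    · exact Or.inl ⟨hdead, hW.win_of_deadEnd hdead⟩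
    · obtain ⟨x, hx, hWx⟩ := hW.exists_edge hturn hdead
      exact Or.inr ⟨x, hx, ih x hx hWx⟩
  next hturn =>
    exact ⟨hW.win_of_deadEnd, fun x hx => ih x hx (hW.of_edge hturn hx)⟩

end GameArena

section Approx

variable {V : Vocab} {c : ℕ} {e : ℕ → Option (SCLFormula V)} {b : Bool}

@[simp] theorem approx_bot : approx c e b (.bot : SCLFormula V) = .bot := by cases c <;> rfl

@[simp] theorem approx_eq (x y : ℕ) : approx c e b (.eq x y : SCLFormula V) = .eq x y := by
  cases c <;> rfl

@[simp] theorem approx_rel (R : V.Rel) (a : Fin (V.arity R) → ℕ) :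
    approx c e b (.rel R a) = .rel R a := by
  cases c <;> rfl

@[simp] theorem approx_not (φ : SCLFormula V) :
    approx c e b (.not φ) = .not (approx c e (!b) φ) := by
  cases c <;> rfl

@[simp] theorem approx_and (φ ψ : SCLFormula V) :
    approx c e b (.and φ ψ) = .and (approx c e b φ) (approx c e b ψ) := by
  cases c <;> rfl

@[simp] theorem approx_or (φ ψ : SCLFormula V) :
    approx c e b (.or φ ψ) = .or (approx c e b φ) (approx c e b ψ) := by
  cases c <;> rfl

@[simp] theorem approx_ex (x : ℕ) (φ : SCLFormula V) :
    approx c e b (.ex x φ) = .ex x (approx c e b φ) := by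
  cases c <;> rfl

@[simp] theorem approx_all (x : ℕ) (φ : SCLFormula V) :
    approx c e b (.all x φ) = .all x (approx c e b φ) := by
  cases c <;> rfl

@[simp] theorem approx_lab (L : ℕ) (φ : SCLFormula V) :
    approx c e b (.lab L φ) = approx c (Function.update e L (some (.lab L φ))) b φ := by
  cases c <;> rfl

@[simp] theorem approx_claim_zero (L : ℕ) :
    approx 0 e b (.claim L : SCLFormula V) = if b then .bot else .not .bot := rfl

@[simp] theorem approx_claim_succ (L : ℕ) :
    approx (c + 1) e b (.claim L : SCLFormula V) =
      (e L).elim (if b then .bot else .not .bot) (approx c e b) := by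
  simp only [approx, approxCore]
  cases e L <;> rfl

end Approx

section BStepIff

variable {V : Vocab} {M : Struct.{u} V} {e : ℕ → Option (SCLFormula V)} {s : ℕ → M.Dom}
  {b : Bool} {n k : ℕ} {q : SCLPos V M.Dom}

@[simp] theorem not_bStep_bot : ¬ BStep M (⟨.bot, e, s, b⟩, n) (q, k) := by
  rintro ⟨⟩

@[simp] theorem not_bStep_eq {x y : ℕ} : ¬ BStep M (⟨.eq x y, e, s, b⟩, n) (q, k) := by
  rintro ⟨⟩

@[simp] theorem not_bStep_rel {R : V.Rel} {a : Fin (V.arity R) → ℕ} :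
    ¬ BStep M (⟨.rel R a, e, s, b⟩, n) (q, k) := by
  rintro ⟨⟩

@[simp] theorem bStep_claim_iff {L : ℕ} :
    BStep M (⟨.claim L, e, s, b⟩, n) (q, k) ↔
      n = k + 1 ∧ ∃ χ, e L = some χ ∧ q = ⟨χ, e, s, b⟩ := by
  constructor
  · rintro ⟨⟩
    exact ⟨rfl, _, ‹_›, rfl⟩
  · rintro ⟨rfl, χ, hχ, rfl⟩
    exact .claimStep L e s b χ k hχ

@[simp] theorem bStep_not_iff {φ : SCLFormula V} :
    BStep M (⟨.not φ, e, s, b⟩, n) (q, k) ↔ q = ⟨φ, e, s, !b⟩ ∧ k = n := by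
  constructor
  · rintro ⟨⟩
    exact ⟨rfl, rfl⟩
  · rintro ⟨rfl, rfl⟩
    exact .neg φ e s b _

@[simp] theorem bStep_and_iff {φ ψ : SCLFormula V} :
    BStep M (⟨.and φ ψ, e, s, b⟩, n) (q, k) ↔
      (q = ⟨φ, e, s, b⟩ ∨ q = ⟨ψ, e, s, b⟩) ∧ k = n := by
  constructor
  · rintro ⟨⟩ <;> simp
  · rintro ⟨rfl | rfl, rfl⟩
    exacts [.andLeft φ ψ e s b _, .andRight φ ψ e s b _]

@[simp] theorem bStep_or_iff {φ ψ : SCLFormula V} :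
    BStep M (⟨.or φ ψ, e, s, b⟩, n) (q, k) ↔
      (q = ⟨φ, e, s, b⟩ ∨ q = ⟨ψ, e, s, b⟩) ∧ k = n := by
  constructor
  · rintro ⟨⟩ <;> simp
  · rintro ⟨rfl | rfl, rfl⟩
    exacts [.orLeft φ ψ e s b _, .orRight φ ψ e s b _]

@[simp] theorem bStep_ex_iff {x : ℕ} {φ : SCLFormula V} :
    BStep M (⟨.ex x φ, e, s, b⟩, n) (q, k) ↔
      (∃ a, q = ⟨φ, e, Function.update s x a, b⟩) ∧ k = n := by
  constructor
  · rintro ⟨⟩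
    exact ⟨⟨_, rfl⟩, rfl⟩
  · rintro ⟨⟨a, rfl⟩, rfl⟩
    exact .exStep x φ e s b _ a

@[simp] theorem bStep_all_iff {x : ℕ} {φ : SCLFormula V} :
    BStep M (⟨.all x φ, e, s, b⟩, n) (q, k) ↔
      (∃ a, q = ⟨φ, e, Function.update s x a, b⟩) ∧ k = n := by
  constructor
  · rintro ⟨⟩
    exact ⟨⟨_, rfl⟩, rfl⟩
  · rintro ⟨⟨a, rfl⟩, rfl⟩
    exact .allStep x φ e s b _ a

@[simp] theorem bStep_lab_iff {L : ℕ} {φ : SCLFormula V} :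
    BStep M (⟨.lab L φ, e, s, b⟩, n) (q, k) ↔
      q = ⟨φ, Function.update e L (some (.lab L φ)), s, b⟩ ∧ k = n := by
  constructor
  · rintro ⟨⟩
    exact ⟨rfl, rfl⟩
  · rintro ⟨rfl, rfl⟩
    exact .labStep L φ e s b _

end BStepIff

section BoundedGame

variable {V : Vocab} {M : Struct.{u} V}

noncomputable def goRank {D : Type u} : GOPos V D → ℕ ×ₗ ℕ ×ₗ ℕ
  | .start => toLex (2, toLex (0, 0))
  | .mid _ => toLex (1, toLex (0, 0))
  | .inner p c => toLex (0, toLex (c, sizeOf p.form))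

theorem goRank_lt_of_goStep {φ : SCLFormula V} {s : ℕ → M.Dom} {v x : GOPos V M.Dom}
    (h : GOStep M φ s v x) : goRank x < goRank v := by
  rcases h with _ | _ | ⟨p, q, m, k, h⟩
  · simp [goRank, Prod.Lex.toLex_lt_toLex]
  · simp [goRank, Prod.Lex.toLex_lt_toLex]
  · cases h <;> simp [goRank, Prod.Lex.toLex_lt_toLex] <;> omega

theorem wellFounded_gameOmega (φ : SCLFormula V) (s : ℕ → M.Dom) :
    WellFounded fun x v => (gameOmega M φ s).edge v x :=
  Subrelation.wf (fun h => goRank_lt_of_goStep h) (InvImage.wf goRank wellFounded_lt)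

def ApproxHolds (M : Struct.{u} V) (p : SCLPos V M.Dom) (c : ℕ) : Prop :=
  FOSat M p.asg (approx c p.env p.pol p.form) ↔ p.pol = true

def ApproxRegion (M : Struct.{u} V) (φ : SCLFormula V) (s : ℕ → M.Dom) : GOPos V M.Dom → Prop
  | .start => ∀ n', ∃ n, n' ≤ n ∧ ApproxHolds M (initPos φ s) n
  | .mid n' => ∃ n, n' ≤ n ∧ ApproxHolds M (initPos φ s) n
  | .inner p c => ApproxHolds M p c

variable {φ : SCLFormula V} {s : ℕ → M.Dom}

theorem goStep_start_iff {y : GOPos V M.Dom} : GOStep M φ s .start y ↔ ∃ n', y = .mid n' := by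
  constructor
  · rintro ⟨⟩
    exact ⟨_, rfl⟩
  · rintro ⟨n', rfl⟩
    exact .abelardPick n'

theorem goStep_mid_iff {n' : ℕ} {y : GOPos V M.Dom} :
    GOStep M φ s (.mid n') y ↔ ∃ n, n' ≤ n ∧ y = .inner (initPos φ s) n := by
  constructor
  · rintro ⟨⟩
    exact ⟨_, ‹_›, rfl⟩
  · rintro ⟨n, hn, rfl⟩
    exact .eloisePick n' n hn

theorem goStep_inner_iff {p : SCLPos V M.Dom} {c : ℕ} {y : GOPos V M.Dom} :
    GOStep M φ s (.inner p c) y ↔ ∃ q k, y = .inner q k ∧ BStep M (p, c) (q, k) := by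
  constructor
  · rintro ⟨⟩
    exact ⟨_, _, rfl, ‹_›⟩
  · rintro ⟨q, k, rfl, h⟩
    exact .play p q c k h

theorem exists_goStep_inner_iff {p : SCLPos V M.Dom} {c : ℕ} {G : GOPos V M.Dom → Prop} :
    (∃ y, GOStep M φ s (.inner p c) y ∧ G y) ↔
      ∃ q k, BStep M (p, c) (q, k) ∧ G (.inner q k) := by
  simp only [goStep_inner_iff]
  aesop

theorem forall_goStep_inner_iff {p : SCLPos V M.Dom} {c : ℕ} {G : GOPos V M.Dom → Prop} :
    (∀ y, GOStep M φ s (.inner p c) y → G y) ↔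
      ∀ q k, BStep M (p, c) (q, k) → G (.inner q k) := by
  simp only [goStep_inner_iff]
  aesop

theorem approxHolds_iff_eloiseCPre (p : SCLPos V M.Dom) (c : ℕ) :
    ApproxHolds M p c ↔ (gameOmega M φ s).eloiseCPre (ApproxRegion M φ s) (.inner p c) := by
  obtain ⟨form, e, sa, b⟩ := p
  simp only [ApproxHolds, GameArena.eloiseCPre, gameOmega, goTurn, goWin, GameArena.DeadEnd,
    exists_goStep_inner_iff, forall_goStep_inner_iff]
  -- Each move of the game matches the clause of `approx` for the connective at hand.
  cases form
  case claim L =>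
    rcases c with _ | c
    · cases b <;> simp [posTurn, posWin, FOSat, SCLFormula.IsFOAtom]
    · cases hL : e L <;> cases b <;>
        simp [hL, posTurn, posWin, FOSat, ApproxRegion, ApproxHolds, SCLFormula.IsFOAtom]
  all_goals cases b <;>
    simp [posTurn, posWin, atomSat, FOSat, ApproxRegion, ApproxHolds, SCLFormula.IsFOAtom]
  all_goals first | tauto | aesop

theorem approxRegion_iff_eloiseCPre (v : GOPos V M.Dom) :
    ApproxRegion M φ s v ↔ (gameOmega M φ s).eloiseCPre (ApproxRegion M φ s) v := by
  rcases v with _ | n' | ⟨p, c⟩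
  · simp [GameArena.eloiseCPre, gameOmega, goTurn, goWin, GameArena.DeadEnd, goStep_start_iff,
      ApproxRegion]
  · simp [GameArena.eloiseCPre, gameOmega, goTurn, goWin, goStep_mid_iff, ApproxRegion]
  · exact approxHolds_iff_eloiseCPre p c

theorem bndTrue_iff_frequently_approximant :
    BndTrue M s φ ↔ ∃ᶠ n in Filter.atTop, FOSat M s (approximant φ n) := by
  rw [BndTrue, Filter.frequently_atTop, GameArena.hasWinningStrategy_iff_of_eq_eloiseCPre
    (wellFounded_gameOmega φ s) approxRegion_iff_eloiseCPre]
  simp [ApproxRegion, ApproxHolds, initPos, approximant]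

end BoundedGame

theorem exists_le_add_one_iff {P : ℕ → Prop} {n : ℕ} :
    (∃ m ≤ n + 1, P m) ↔ P 0 ∨ ∃ m ≤ n, P (m + 1) := by
  constructor
  · rintro ⟨_ | m, hm, h⟩
    exacts [.inl h, .inr ⟨m, by omega, h⟩]
  · rintro (h | ⟨m, hm, h⟩)
    exacts [⟨0, by omega, h⟩, ⟨m + 1, by omega, h⟩]

theorem frequently_atTop_iff_exists_of_monotone {P : ℕ → Prop} (hP : Monotone P) :
    (∃ᶠ n in Filter.atTop, P n) ↔ ∃ n, P n := by
  rw [Filter.frequently_atTop]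
  exact ⟨fun h => (h 0).imp fun _ => And.right,
    fun ⟨n, hn⟩ n' => ⟨max n' n, le_max_left _ _, hP (le_max_right _ _) hn⟩⟩

section Graphs

variable {M : Struct.{u} binVocab}

def WalkOfLength (M : Struct.{u} binVocab) (u v : M.Dom) (m : ℕ) : Prop :=
  ∃ f : ℕ → M.Dom, f 0 = u ∧ f m = v ∧ ∀ i < m, Edge M (f i) (f (i + 1))

theorem walkOfLength_zero_iff {u v : M.Dom} : WalkOfLength M u v 0 ↔ u = v :=
  ⟨fun ⟨f, h0, h1, _⟩ => h0 ▸ h1, fun h => ⟨fun _ => u, rfl, h, by simp⟩⟩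

theorem walkOfLength_succ_iff {u v : M.Dom} {m : ℕ} :
    WalkOfLength M u v (m + 1) ↔ ∃ w, Edge M u w ∧ WalkOfLength M w v m := by
  constructor
  · rintro ⟨f, rfl, rfl, hf⟩
    exact ⟨f 1, hf 0 (by omega), fun i => f (i + 1), rfl, rfl,
      fun i hi => hf (i + 1) (by omega)⟩
  · rintro ⟨w, huw, f, rfl, rfl, hf⟩
    refine ⟨fun i => Nat.casesOn i u f, rfl, rfl, ?_⟩
    rintro (_ | i) hi
    · exact huw
    · exact hf i (by omega)

@[simp] theorem walkOfLength_one_iff {u v : M.Dom} : WalkOfLength M u v 1 ↔ Edge M u v := by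
  simp [walkOfLength_succ_iff, walkOfLength_zero_iff]

theorem reachIn_iff {u v : M.Dom} {n : ℕ} : ReachIn M u v n ↔ ∃ m ≤ n, WalkOfLength M u v m :=
  ⟨fun ⟨m, f, hm, hf⟩ => ⟨m, hm, f, hf⟩, fun ⟨m, hm, f, hf⟩ => ⟨m, f, hm, hf⟩⟩

theorem ReachIn.mono {u v : M.Dom} {n n' : ℕ} (h : ReachIn M u v n) (hn : n ≤ n') :
    ReachIn M u v n' :=
  let ⟨m, f, hm, hf⟩ := h
  ⟨m, f, hm.trans hn, hf⟩

theorem hasCycle_of_walkOfLength {u : M.Dom} {m : ℕ} (h : WalkOfLength M u u (m + 1)) :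
    HasCycle M := by
  induction m using Nat.strong_induction_on generalizing u with
  | _ m ih =>
  obtain ⟨f, rfl, hfm, hf⟩ := h
  by_cases hsimple : ∀ i j, i < m + 1 → j < m + 1 → i ≠ j → f i ≠ f j
  · exact ⟨m + 1, f, by omega, hf, hfm.symm, hsimple⟩
  push Not at hsimple
  obtain ⟨i, j, hi, hj, hij, hfij⟩ := hsimple
  wlog hlt : i < j generalizing i j
  · exact this j i hj hi hij.symm hfij.symm (by omega)
  refine ih (j - i - 1) (by omega) ⟨fun t => f (i + t), rfl, ?_, fun t ht => ?_⟩
  · simp [show i + (j - i - 1 + 1) = j by omega, hfij]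
  · simpa [add_assoc] using hf (i + t) (by omega)

theorem hasCycle_iff_exists_walkOfLength :
    HasCycle M ↔ ∃ u m, WalkOfLength M u u (m + 1) := by
  constructor
  · rintro ⟨n, f, hn, hf, h0, -⟩
    obtain ⟨m, rfl⟩ := Nat.exists_eq_add_of_le' hn
    exact ⟨f 0, m, f, rfl, h0.symm, hf⟩
  · rintro ⟨u, m, h⟩
    exact hasCycle_of_walkOfLength h

theorem foSat_eform {s : ℕ → M.Dom} {x y : ℕ} :
    FOSat M s (Eform x y) ↔ Edge M (s x) (s y) := by
  simp only [FOSat, Eform, Edge, apply_ite s]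

@[simp] theorem approx_eform {c : ℕ} {e : ℕ → Option (SCLFormula binVocab)} {b : Bool}
    (x y : ℕ) :
    approx c e b (Eform x y) = Eform x y :=
  approx_rel _ _

/-- `L(Exy ∨ ∃z(Exz ∧ ∃x(x = z ∧ C_L)))`: Eloise claims a walk from `x` to `y` by moving `x`
forward along an edge and jumping back to the label. -/
def walkClaim (x y z : ℕ) : SCLFormula binVocab :=
  .lab 0 (.or (Eform x y) (.ex z (.and (Eform x z) (.ex x (.and (.eq x z) (.claim 0))))))

theorem approx_walkClaim {x y z c : ℕ} {e : ℕ → Option (SCLFormula binVocab)} {b : Bool} :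
    approx c e b (walkClaim x y z) =
      .or (Eform x y) (.ex z (.and (Eform x z) (.ex x (.and (.eq x z)
        (approx c (Function.update e 0 (some (walkClaim x y z))) b (.claim 0)))))) := by
  cases c <;> rfl

theorem foSat_approx_walkClaim {x y z : ℕ} (hxy : x ≠ y) (hxz : x ≠ z) (hyz : y ≠ z) (n : ℕ)
    (e : ℕ → Option (SCLFormula binVocab)) (s : ℕ → M.Dom) :
    FOSat M s (approx n e true (walkClaim x y z)) ↔
      ∃ m ≤ n, WalkOfLength M (s x) (s y) (m + 1) := by
  induction n generalizing e s with
  | zero =>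
    simp [approx_walkClaim, FOSat, foSat_eform, walkOfLength_succ_iff, walkOfLength_zero_iff]
  | succ n ih =>
    rw [approx_walkClaim, approx_claim_succ, Function.update_self, Option.elim_some]
    simp only [FOSat, foSat_eform, ih, Function.update_self, Function.update_of_ne, hxy.symm, hxz,
      hxz.symm, hyz, ne_eq, not_false_eq_true, exists_eq_left, exists_le_add_one_iff, zero_add,
      walkOfLength_one_iff]
    refine or_congr_right
      ⟨fun ⟨w, hw, m, hm, hwalk⟩ => ⟨m, hm, walkOfLength_succ_iff.2 ⟨w, hw, hwalk⟩⟩,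
        fun ⟨m, hm, hwalk⟩ => ?_⟩
    obtain ⟨w, hw, hwalk⟩ := walkOfLength_succ_iff.1 hwalk
    exact ⟨w, hw, m, hm, hwalk⟩

theorem foSat_approximant_phiCycle {s : ℕ → M.Dom} {n : ℕ} :
    FOSat M s (approximant phiCycle n) ↔ ∃ u, ∃ m ≤ n, WalkOfLength M u u (m + 1) := by
  change FOSat M s (approx n _ true (.ex 0 (.ex 1 (.and (.eq 0 1) (walkClaim 1 0 2))))) ↔ _
  simp [FOSat, foSat_approx_walkClaim]

theorem foSat_approximant_phiDiam {s : ℕ → M.Dom} {n : ℕ} :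
    FOSat M s (approximant phiDiam n) ↔ ∀ u v, ReachIn M u v (n + 1) := by
  change FOSat M s (approx n _ true (.all 0 (.all 1 (.or (.eq 0 1) (walkClaim 0 1 2))))) ↔ _
  simp [FOSat, foSat_approx_walkClaim, reachIn_iff, exists_le_add_one_iff,
    walkOfLength_zero_iff]

theorem bndTrue_phiCycle_iff {s : ℕ → M.Dom} : BndTrue M s phiCycle ↔ HasCycle M := by
  have hmono : Monotone fun n => ∃ u, ∃ m ≤ n, WalkOfLength M u u (m + 1) :=
    fun _ _ hn ⟨u, m, hm, hw⟩ => ⟨u, m, hm.trans hn, hw⟩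
  simp only [bndTrue_iff_frequently_approximant, foSat_approximant_phiCycle,
    frequently_atTop_iff_exists_of_monotone hmono, hasCycle_iff_exists_walkOfLength]
  exact ⟨fun ⟨_, u, m, _, hw⟩ => ⟨u, m, hw⟩, fun ⟨u, m, hw⟩ => ⟨m, u, m, le_rfl, hw⟩⟩

theorem bndTrue_phiDiam_iff {s : ℕ → M.Dom} : BndTrue M s phiDiam ↔ FiniteDiameter M := by
  have hmono : Monotone fun n => ∀ u v, ReachIn M u v (n + 1) :=
    fun _ _ hn h u v => (h u v).mono (by omega)
  simp only [bndTrue_iff_frequently_approximant, foSat_approximant_phiDiam,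
    frequently_atTop_iff_exists_of_monotone hmono]
  exact ⟨fun ⟨n, h⟩ => ⟨n + 1, h⟩, fun ⟨n, h⟩ => ⟨n, fun u v => (h u v).mono (by omega)⟩⟩

end Graphs

/-- Under bounded semantics, `phiCycle` defines the class of
directed graphs (finite or infinite) containing a cycle, and `phiDiam` defines
the class of directed graphs of finite diameter. -/
theorem cycle_and_finite_diameter_definable_in_BndSCL :
    (∀ M : Struct.{u} binVocab,
      (∀ s : ℕ → M.Dom, BndTrue M s phiCycle) ↔ HasCycle M) ∧
    (∀ M : Struct.{u} binVocab,
      (∀ s : ℕ → M.Dom, BndTrue M s phiDiam) ↔ FiniteDiameter M) :=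
  ⟨fun _ => by simp only [bndTrue_phiCycle_iff, forall_const],
    fun _ => by simp only [bndTrue_phiDiam_iff, forall_const]⟩
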